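/- If n ≥ 1, r ≥ 1 and t ≥ 2, then η_dl(H_{n,t,r}) ≤ ⌈(t + n + r − 1) / (n + r)⌉; that is, H_{n,t,r} admits a d-lucky labeling with labels from {1,…,⌈(t + n + r − 1)/(n + r)⌉}. -/
import Mathlib


attribute [local instance] Classical.propDecidable

/-- The d-lucky sum of a vertex `u`. -/
noncomputable def dLuckySum {V : Type*} [Fintype V] (G : SimpleGraph V) (ℓ : V → ℕ)
    (u : V) : ℕ :=
  G.degree u + ∑ v ∈ G.neighborFinset u, ℓ v

/-- A labeling is d-lucky if adjacent vertices have distinct d-lucky sums. -/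
def IsDLuckyLabeling {V : Type*} [Fintype V] (G : SimpleGraph V) (ℓ : V → ℕ) : Prop :=
  ∀ ⦃u v : V⦄, G.Adj u v → dLuckySum G ℓ u ≠ dLuckySum G ℓ v

/-- The d-lucky number: the least positive integer `k` such that `G` admits a
d-lucky labeling with labels in `{1, …, k}`. -/
noncomputable def dLuckyNumber {V : Type*} [Fintype V] (G : SimpleGraph V) : ℕ :=
  sInf {k : ℕ | 0 < k ∧ ∃ ℓ : V → ℕ, (∀ v : V, 1 ≤ ℓ v ∧ ℓ v ≤ k) ∧ IsDLuckyLabeling G ℓ}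

/-- Generating relation for `H_{n,t,r}`: `Sum.inl (i, a)` is the vertex `(i,a)` of
the complete `t`-partite graph `H_{n,t}` (partite set `i`, vertex `a`), and
`Sum.inr (i, a, c)` is the pendant vertex `p_{i,a,c}` attached to `(i,a)`. -/
def cocktailRel (n t r : ℕ) :
    (Fin t × Fin n ⊕ Fin t × Fin n × Fin r) → (Fin t × Fin n ⊕ Fin t × Fin n × Fin r) → Prop
  | Sum.inl q, Sum.inl q' => q.1 ≠ q'.1
  | Sum.inl q, Sum.inr p => p.1 = q.1 ∧ p.2.1 = q.2
  | _, _ => False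

/-- The graph `H_{n,t,r} = H_{n,t} ∘ (complement of K_r)`: the complete `t`-partite
graph with parts of size `n`, with `r` pendant vertices attached to each vertex. -/
def cocktailParty (n t r : ℕ) : SimpleGraph (Fin t × Fin n ⊕ Fin t × Fin n × Fin r) :=
  SimpleGraph.fromRel (cocktailRel n t r)

lemma greedy_sum (c : ℕ) : ∀ (m u : ℕ), u ≤ m * c →
    (∑ a ∈ Finset.range m, min c (u - a * c)) = u := by
  intro m
  induction m with
  | zero => intro u h; simp at h ⊢; omega
  | succ m ih =>
    intro u h
    rw [Finset.sum_range_succ']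
    have hrw : ∀ a : ℕ, min c (u - (a + 1) * c) = min c ((u - c) - a * c) := by
      intro a
      congr 1
      have : (a + 1) * c = a * c + c := by ring
      omega
    simp only [hrw]
    have hle : u - c ≤ m * c := by
      have h' : (m + 1) * c = m * c + c := by ring
      omega
    rw [ih (u - c) hle]
    omega

lemma cp_adj_inl_inl {n t r : ℕ} (i : Fin t) (a : Fin n) (q : Fin t × Fin n) :
    (cocktailParty n t r).Adj (Sum.inl (i, a)) (Sum.inl q) ↔ i ≠ q.1 := by
  obtain ⟨j, b⟩ := q
  simp only [cocktailParty, SimpleGraph.fromRel_adj, cocktailRel]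
  constructor
  · rintro ⟨-, h | h⟩
    · simp_all
    · exact fun h' => h h'.symm
  · intro h
    exact ⟨by simp [Prod.ext_iff]; intro hij; exact absurd hij h, Or.inl h⟩

lemma cp_adj_inl_inr {n t r : ℕ} (i : Fin t) (a : Fin n) (p : Fin t × Fin n × Fin r) :
    (cocktailParty n t r).Adj (Sum.inl (i, a)) (Sum.inr p) ↔ p.1 = i ∧ p.2.1 = a := by
  simp only [cocktailParty, SimpleGraph.fromRel_adj, cocktailRel]
  constructor
  · rintro ⟨-, h | h⟩ <;> simp_all
  · intro h; exact ⟨by simp, Or.inl h⟩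

lemma cp_adj_inr_inl {n t r : ℕ} (p : Fin t × Fin n × Fin r) (q : Fin t × Fin n) :
    (cocktailParty n t r).Adj (Sum.inr p) (Sum.inl q) ↔ p.1 = q.1 ∧ p.2.1 = q.2 := by
  rw [SimpleGraph.adj_comm]
  exact cp_adj_inl_inr q.1 q.2 p

lemma cp_adj_inr_inr {n t r : ℕ} (p q : Fin t × Fin n × Fin r) :
    ¬ (cocktailParty n t r).Adj (Sum.inr p) (Sum.inr q) := by
  simp [cocktailParty, SimpleGraph.fromRel_adj, cocktailRel]

lemma nbr_sum_inl {n t r : ℕ} (i : Fin t) (a : Fin n)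
    (f : (Fin t × Fin n ⊕ Fin t × Fin n × Fin r) → ℕ) :
    ∑ v ∈ (cocktailParty n t r).neighborFinset (Sum.inl (i, a)), f v
      = (∑ j ∈ Finset.univ.erase i, ∑ b : Fin n, f (Sum.inl (j, b)))
        + ∑ c : Fin r, f (Sum.inr (i, a, c)) := by
  classical
  have hnb : (cocktailParty n t r).neighborFinset (Sum.inl (i, a))
      = Finset.univ.filter (fun v => (cocktailParty n t r).Adj (Sum.inl (i, a)) v) := by
    ext v; simp [SimpleGraph.mem_neighborFinset]
  rw [hnb, Finset.sum_filter, Fintype.sum_sum_type]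
  congr 1
  · simp only [cp_adj_inl_inl]
    rw [Fintype.sum_prod_type]
    have h1 : ∀ j : Fin t, (∑ b : Fin n, if i ≠ j then f (Sum.inl (j, b)) else 0)
        = if j ∈ Finset.univ.erase i then ∑ b : Fin n, f (Sum.inl (j, b)) else 0 := by
      intro j
      by_cases h : i = j <;> simp [h, Ne, eq_comm]
    simp only [h1]
    rw [Finset.sum_ite_mem, Finset.univ_inter]
  · simp only [cp_adj_inl_inr]
    rw [Fintype.sum_prod_type]
    have h2 : ∀ j : Fin t, (∑ y : Fin n × Fin r, if (j, y).1 = i ∧ (j, y).2.1 = a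
          then f (Sum.inr (j, y)) else 0)
        = if j = i then ∑ c : Fin r, f (Sum.inr (j, a, c)) else 0 := by
      intro j
      by_cases h : j = i
      · subst h
        simp only [true_and, if_pos rfl]
        rw [Fintype.sum_prod_type]
        have h3 : ∀ b : Fin n, (∑ c : Fin r, if (b, c).1 = a then f (Sum.inr (j, b, c)) else 0)
            = if b = a then ∑ c : Fin r, f (Sum.inr (j, b, c)) else 0 := by
          intro b; by_cases hb : b = a <;> simp [hb]
        simp only [h3]
        simp [Finset.sum_ite_eq']
      · simp [h]
    simp only [h2]
    simp [Finset.sum_ite_eq']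

lemma nbr_sum_inr {n t r : ℕ} (i : Fin t) (a : Fin n) (c : Fin r)
    (f : (Fin t × Fin n ⊕ Fin t × Fin n × Fin r) → ℕ) :
    ∑ v ∈ (cocktailParty n t r).neighborFinset (Sum.inr (i, a, c)), f v
      = f (Sum.inl (i, a)) := by
  classical
  have hnb : (cocktailParty n t r).neighborFinset (Sum.inr (i, a, c))
      = Finset.univ.filter (fun v => (cocktailParty n t r).Adj (Sum.inr (i, a, c)) v) := by
    ext v; simp [SimpleGraph.mem_neighborFinset]
  rw [hnb, Finset.sum_filter, Fintype.sum_sum_type]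
  have h2 : ∀ p : Fin t × Fin n × Fin r,
      ¬ (cocktailParty n t r).Adj (Sum.inr (i, a, c)) (Sum.inr p) := fun p => cp_adj_inr_inr _ p
  simp only [cp_adj_inr_inl, h2, if_false]
  rw [Fintype.sum_prod_type]
  have h1 : ∀ j : Fin t, (∑ b : Fin n, if (i, a, c).1 = (j, b).1 ∧ (i, a, c).2.1 = (j, b).2
        then f (Sum.inl (j, b)) else 0)
      = if j = i then f (Sum.inl (j, a)) else 0 := by
    intro j
    by_cases h : j = i
    · subst h; simp [eq_comm, Finset.sum_ite_eq']
    · have h' : ¬ i = j := fun hh => h hh.symm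
      simp [h, h']
  simp only [h1]
  simp [Finset.sum_ite_eq']

/-- the labeling -/
def cpLab (n t r k : ℕ) : (Fin t × Fin n ⊕ Fin t × Fin n × Fin r) → ℕ
  | Sum.inl (i, a) => k - min (k - 1) (min i.val (n * (k - 1)) - a.val * (k - 1))
  | Sum.inr (i, _, c) => 1 + min (k - 1) ((i.val - min i.val (n * (k - 1))) - c.val * (k - 1))

lemma cp_construction (n t r k : ℕ) (hn : 1 ≤ n) (hr : 1 ≤ r) (ht : 2 ≤ t)
    (hk2 : 2 ≤ k) (hkt : k ≤ t) (hbound : t - 1 ≤ n * (k - 1) + r * (k - 1)) :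
    (∀ v, 1 ≤ cpLab n t r k v ∧ cpLab n t r k v ≤ k) ∧
      IsDLuckyLabeling (cocktailParty n t r) (cpLab n t r k) := by
  classical
  set G := cocktailParty n t r with hG
  set ℓ := cpLab n t r k with hℓ
  have hbnd : ∀ v, 1 ≤ ℓ v ∧ ℓ v ≤ k := by
    rintro (⟨i, a⟩ | ⟨i, a, c⟩)
    · show 1 ≤ k - min (k - 1) _ ∧ k - min (k - 1) _ ≤ k
      generalize (min i.val (n * (k - 1)) - a.val * (k - 1)) = x
      omega
    · show 1 ≤ 1 + min (k - 1) _ ∧ 1 + min (k - 1) _ ≤ k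
      generalize ((i.val - min i.val (n * (k - 1))) - c.val * (k - 1)) = x
      omega
  -- part sums of main labels
  have hT : ∀ i : Fin t,
      (∑ b : Fin n, ℓ (Sum.inl (i, b))) + min i.val (n * (k - 1)) = n * k := by
    intro i
    have hg : ∑ b ∈ Finset.range n, min (k - 1) (min i.val (n * (k - 1)) - b * (k - 1))
        = min i.val (n * (k - 1)) := greedy_sum (k - 1) n _ (min_le_right _ _)
    have hfe : (∑ b : Fin n, ℓ (Sum.inl (i, b)))
        = ∑ b ∈ Finset.range n, (k - min (k - 1) (min i.val (n * (k - 1)) - b * (k - 1))) :=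
      Fin.sum_univ_eq_sum_range
        (fun b => k - min (k - 1) (min i.val (n * (k - 1)) - b * (k - 1))) n
    have this1 : ∀ b ∈ Finset.range n,
        (k - min (k - 1) (min i.val (n * (k - 1)) - b * (k - 1)))
          + min (k - 1) (min i.val (n * (k - 1)) - b * (k - 1)) = k := by
      intro b _
      generalize (min i.val (n * (k - 1)) - b * (k - 1)) = x
      omega
    have hsum : (∑ b ∈ Finset.range n, (k - min (k - 1) (min i.val (n * (k - 1)) - b * (k - 1))))
        + (∑ b ∈ Finset.range n, min (k - 1) (min i.val (n * (k - 1)) - b * (k - 1))) = n * k := by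
      rw [← Finset.sum_add_distrib, Finset.sum_congr rfl this1, Finset.sum_const,
        Finset.card_range, smul_eq_mul, mul_comm]
    rw [hfe]
    omega
  -- pendant sums
  have hP : ∀ (i : Fin t) (a : Fin n),
      (∑ c : Fin r, ℓ (Sum.inr (i, a, c)))
        = r + (i.val - min i.val (n * (k - 1))) := by
    intro i a
    have hple : (i.val - min i.val (n * (k - 1))) ≤ r * (k - 1) := by
      have hi : i.val < t := i.isLt
      omega
    have hg := greedy_sum (k - 1) r _ hple
    have hfe : (∑ c : Fin r, ℓ (Sum.inr (i, a, c)))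
        = ∑ c ∈ Finset.range r,
            (1 + min (k - 1) ((i.val - min i.val (n * (k - 1))) - c * (k - 1))) :=
      Fin.sum_univ_eq_sum_range
        (fun c => 1 + min (k - 1) ((i.val - min i.val (n * (k - 1))) - c * (k - 1))) r
    rw [hfe, Finset.sum_add_distrib, Finset.sum_const, Finset.card_range, smul_eq_mul,
      mul_one, hg]
  -- degrees
  have hdeg_inl : ∀ (i : Fin t) (a : Fin n),
      G.degree (Sum.inl (i, a)) = (t - 1) * n + r := by
    intro i a
    rw [← SimpleGraph.card_neighborFinset_eq_degree, Finset.card_eq_sum_ones,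
      nbr_sum_inl]
    simp [Finset.card_erase_of_mem]
  have hdeg_inr : ∀ (i : Fin t) (a : Fin n) (c : Fin r),
      G.degree (Sum.inr (i, a, c)) = 1 := by
    intro i a c
    rw [← SimpleGraph.card_neighborFinset_eq_degree, Finset.card_eq_sum_ones,
      nbr_sum_inr]
  -- key value of dLuckySum on main vertices
  set S := ∑ j : Fin t, ∑ b : Fin n, ℓ (Sum.inl (j, b)) with hS
  have hkey : ∀ (i : Fin t) (a : Fin n),
      dLuckySum G ℓ (Sum.inl (i, a)) + n * k
        = (t - 1) * n + r + S + r + i.val := by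
    intro i a
    have hA : (∑ j ∈ Finset.univ.erase i, ∑ b : Fin n, ℓ (Sum.inl (j, b)))
        + (∑ b : Fin n, ℓ (Sum.inl (i, b))) = S := by
      rw [hS]
      exact Finset.sum_erase_add _ _ (Finset.mem_univ i)
    have hTi := hT i
    have hPi := hP i a
    rw [dLuckySum, hdeg_inl i a, nbr_sum_inl i a ℓ, hPi]
    omega
  -- lower bound for main vertices
  have hlow : ∀ (i : Fin t) (a : Fin n),
      2 * ((t - 1) * n + r) ≤ dLuckySum G ℓ (Sum.inl (i, a)) := by
    intro i a
    have h1 : (G.neighborFinset (Sum.inl (i, a))).card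
        ≤ ∑ v ∈ G.neighborFinset (Sum.inl (i, a)), ℓ v := by
      rw [Finset.card_eq_sum_ones]
      exact Finset.sum_le_sum fun v _ => (hbnd v).1
    have h2 : (G.neighborFinset (Sum.inl (i, a))).card = (t - 1) * n + r := by
      rw [SimpleGraph.card_neighborFinset_eq_degree]; exact hdeg_inl i a
    rw [dLuckySum, hdeg_inl i a]
    omega
  -- upper bound for pendant sums
  have hpend : ∀ (i : Fin t) (a : Fin n) (c : Fin r),
      dLuckySum G ℓ (Sum.inr (i, a, c)) ≤ 1 + k := by
    intro i a c
    rw [dLuckySum, hdeg_inr i a c, nbr_sum_inr i a c ℓ]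
    have := (hbnd (Sum.inl (i, a))).2
    omega
  have hbig : ∀ (i : Fin t) (a : Fin n) (j : Fin t) (b : Fin n) (c : Fin r),
      dLuckySum G ℓ (Sum.inr (j, b, c)) ≠ dLuckySum G ℓ (Sum.inl (i, a)) := by
    intro i a j b c heq
    have h1 := hlow i a
    have h2 := hpend j b c
    have h3 : (t - 1) * 1 ≤ (t - 1) * n := Nat.mul_le_mul_left _ hn
    omega
  refine ⟨hbnd, ?_⟩
  rintro (⟨i, a⟩ | ⟨i, a, c⟩) (⟨j, b⟩ | ⟨j, b, c'⟩) hadj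
  · have hij : i ≠ j := (cp_adj_inl_inl i a (j, b)).mp hadj
    intro heq
    have h1 := hkey i a
    have h2 := hkey j b
    have : i.val = j.val := by omega
    exact hij (Fin.ext this)
  · exact fun heq => hbig i a j b c' heq.symm
  · exact hbig j b i a c
  · exact absurd hadj (cp_adj_inr_inr _ _)

theorem dLuckyNumber_cocktailParty_upper (n t r : ℕ) (hn : 1 ≤ n) (hr : 1 ≤ r)
    (ht : 2 ≤ t) :
    dLuckyNumber (cocktailParty n t r) ≤
      ⌈((t : ℚ) + (n : ℚ) + (r : ℚ) - 1) / ((n : ℚ) + (r : ℚ))⌉₊ ∧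
    ∃ ℓ : (Fin t × Fin n ⊕ Fin t × Fin n × Fin r) → ℕ,
      (∀ v, 1 ≤ ℓ v ∧ ℓ v ≤ ⌈((t : ℚ) + (n : ℚ) + (r : ℚ) - 1) / ((n : ℚ) + (r : ℚ))⌉₊) ∧
      IsDLuckyLabeling (cocktailParty n t r) ℓ := by
  set x : ℚ := ((t : ℚ) + (n : ℚ) + (r : ℚ) - 1) / ((n : ℚ) + (r : ℚ)) with hx
  set k := ⌈x⌉₊ with hk
  have hpos : (0 : ℚ) < (n : ℚ) + (r : ℚ) := by positivity
  have hk2 : 2 ≤ k := by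
    have h1 : (1 : ℚ) < x := by
      rw [hx, lt_div_iff₀ hpos]
      have : (2 : ℚ) ≤ (t : ℚ) := by exact_mod_cast ht
      linarith
    have := Nat.lt_ceil.mpr (by exact_mod_cast h1 : ((1 : ℕ) : ℚ) < x)
    omega
  have hkt : k ≤ t := by
    apply Nat.ceil_le.mpr
    rw [hx, div_le_iff₀ hpos]
    have h1 : (1 : ℚ) ≤ (n : ℚ) := by exact_mod_cast hn
    have h2 : (1 : ℚ) ≤ (r : ℚ) := by exact_mod_cast hr
    have h3 : (2 : ℚ) ≤ (t : ℚ) := by exact_mod_cast ht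
    nlinarith
  have hbound : t - 1 ≤ n * (k - 1) + r * (k - 1) := by
    have hle : x ≤ (k : ℚ) := Nat.le_ceil x
    rw [hx, div_le_iff₀ hpos] at hle
    have h4 : (t : ℚ) + n + r ≤ (k : ℚ) * (n + r) + 1 := by linarith
    have hnat : t + n + r ≤ k * (n + r) + 1 := by exact_mod_cast h4
    have hexp : k * (n + r) = (k - 1) * (n + r) + (n + r) := by
      have h5 : k - 1 + 1 = k := by omega
      calc k * (n + r) = (k - 1 + 1) * (n + r) := by rw [h5]
        _ = (k - 1) * (n + r) + (n + r) := by ring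
    have hexp2 : (k - 1) * (n + r) = n * (k - 1) + r * (k - 1) := by ring
    omega
  obtain ⟨hb, hl⟩ := cp_construction n t r k hn hr ht hk2 hkt hbound
  exact ⟨Nat.sInf_le ⟨by omega, cpLab n t r k, hb, hl⟩, cpLab n t r k, hb, hl⟩
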